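/- arXiv:2407.01448 — 2 statements merged into one kernel-verified Lean document; each statement's English description precedes it below -/
import Mathlib

section
/- Define φ⁺ : G → ℂ by φ⁺(g) = ∑_{σ ∈ S_n} f_σ(g). Then φ⁺ is an eigenvector of the Iwahori Hecke operators at the simple reflections with eigenvalue p: for every 1 ≤ i < n and every g ∈ G, ∑_{t=0}^{p-1} φ⁺(g·x_i(t)·w_{s_i}) = p·φ⁺(g). -/
open Matrix MeasureTheory Pointwise

variable (p n : ℕ) [Fact p.Prime]

/-- The `(i,j)` entry of an element of `GL n ℚ_[p]`. -/
def entry (g : GL (Fin n) ℚ_[p]) (i j : Fin n) : ℚ_[p] :=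
  (g : Matrix (Fin n) (Fin n) ℚ_[p]) i j

/-- The Iwahori subgroup `J`, as a subset of `GL n ℚ_[p]`: matrices of `GL_n(ℤ_p)`
(integral matrix with integral inverse) whose entries strictly below the diagonal
lie in `pℤ_p` (i.e. have norm `< 1`). -/
def Jset : Set (GL (Fin n) ℚ_[p]) :=
  {g | (∀ i j, ‖entry p n g i j‖ ≤ 1) ∧ (∀ i j, ‖entry p n g⁻¹ i j‖ ≤ 1) ∧
       ∀ i j : Fin n, j < i → ‖entry p n g i j‖ < 1}

/-- The diagonal torus `T`. -/
def Tset : Set (GL (Fin n) ℚ_[p]) :=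
  {g | ∀ i j : Fin n, i ≠ j → entry p n g i j = 0}

/-- The group `N` of upper unitriangular matrices. -/
def Nset : Set (GL (Fin n) ℚ_[p]) :=
  {g | (∀ i : Fin n, entry p n g i i = 1) ∧ ∀ i j : Fin n, j < i → entry p n g i j = 0}

/-- The upper triangular Borel subgroup `B`. -/
def Bset : Set (GL (Fin n) ℚ_[p]) :=
  {g | ∀ i j : Fin n, j < i → entry p n g i j = 0}

/-- Permutation matrix `w_σ` of `σ` as an element of `GL n ℚ_[p]`, in the convention
`w_σ · e_j = e_{σ(j)}` (entries `(w_σ)_{ij} = δ_{i, σ(j)}`). -/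
noncomputable def permGL (σ : Equiv.Perm (Fin n)) : GL (Fin n) ℚ_[p] :=
  Matrix.GeneralLinearGroup.mkOfDetNeZero ((σ.permMatrix ℚ_[p])ᵀ) (by
    rw [Matrix.det_transpose, Matrix.det_permutation]
    exact_mod_cast Int.cast_ne_zero.mpr (Equiv.Perm.sign σ).ne_zero)

/-- The elementary matrix `I + t·E_{ij}` as an element of `GL n ℚ_[p]`. -/
noncomputable def elemGL (i j : Fin n) (hij : i ≠ j) (t : ℚ_[p]) : GL (Fin n) ℚ_[p] :=
  Matrix.GeneralLinearGroup.mkOfDetNeZero (Matrix.transvection i j t) (by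
    rw [Matrix.det_transvection_of_ne i j hij]
    exact one_ne_zero)

/-- The set of inversions `Inv(σ) = {(i,j) : i < j, σ⁻¹ i > σ⁻¹ j}`. -/
def InvSet (σ : Equiv.Perm (Fin n)) : Finset (Fin n × Fin n) :=
  Finset.univ.filter fun ij => ij.1 < ij.2 ∧ σ⁻¹ ij.2 < σ⁻¹ ij.1

/-- The length `ℓ(σ)` (number of inversions) of `σ`. -/
def len (σ : Equiv.Perm (Fin n)) : ℕ := (InvSet n σ).card

/-- `i+1` as an element of `Fin n`. -/
def finSucc (i : Fin n) (h : (i : ℕ) + 1 < n) : Fin n := ⟨(i : ℕ) + 1, h⟩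

theorem finSucc_ne (i : Fin n) (h : (i : ℕ) + 1 < n) : i ≠ finSucc n i h := by
  simp [finSucc, Fin.ext_iff]

/-- The value of `χδ_B` at `b`, defined through the diagonal entries of `b`:
`(χδ_B)(b) = ∏_{i=1}^n z_i^{v(b_i)} p^{-(n+1-2i) v(b_i)}`. -/
noncomputable def chiDelta (z : Fin n → ℂˣ) (d : GL (Fin n) ℚ_[p]) : ℂ :=
  ∏ i : Fin n, ((z i : ℂ) ^ (entry p n d i i).valuation *
    (p : ℂ) ^ (-(((n : ℤ) + 1) - 2 * ((i : ℕ) + 1 : ℤ)) * (entry p n d i i).valuation))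

/-- The character `ψ(u) = ∏_{i=1}^{n-1} ψ₀(u_{i,i+1})` of `N`, built from an additive
character `ψ₀` of `ℚ_p`. -/
noncomputable def psiN (ψ₀ : ℚ_[p] → ℂ) (u : GL (Fin n) ℚ_[p]) : ℂ :=
  ∏ i : Fin n, if h : (i : ℕ) + 1 < n then ψ₀ (entry p n u i (finSucc n i h)) else 1

/-- `λ(d)` is `σ`-dominant: for all adjacent indices,
`v(d_i) - v(d_{i+1}) ≥ 0` if `σ⁻¹ i < σ⁻¹(i+1)`, and `≥ -1` if `σ⁻¹ i > σ⁻¹(i+1)`. -/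
def IsDom (σ : Equiv.Perm (Fin n)) (d : GL (Fin n) ℚ_[p]) : Prop :=
  ∀ (i : Fin n) (h : (i : ℕ) + 1 < n),
    (σ⁻¹ i < σ⁻¹ (finSucc n i h) →
      0 ≤ (entry p n d i i).valuation
            - (entry p n d (finSucc n i h) (finSucc n i h)).valuation) ∧
    (σ⁻¹ (finSucc n i h) < σ⁻¹ i →
      -1 ≤ (entry p n d i i).valuation
            - (entry p n d (finSucc n i h) (finSucc n i h)).valuation)

/-- The dominant part `T⁺` of the diagonal torus: `v(d_1) ≥ … ≥ v(d_n)`. -/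
def Tplus : Set (GL (Fin n) ℚ_[p]) :=
  {d | d ∈ Tset p n ∧ Antitone fun i : Fin n => (entry p n d i i).valuation}

/-- The double coset `J g J`. -/
def dcos (g : GL (Fin n) ℚ_[p]) : Set (GL (Fin n) ℚ_[p]) :=
  {x | ∃ a ∈ Jset p n, ∃ b ∈ Jset p n, x = a * g * b}


/-!
Summing the basis gives the function with `φ⁺(b w_σ j) = χδ_B(b)` on each cell `B w_σ J` and
`φ⁺ = 0` off the cells; it is well defined because the cells are disjoint (if `w_τ⁻¹ b w_σ ∈ J`
with `b ∈ B`, its diagonal entries are units, which forces `τ = σ`). Since `x_i(t) ∈ J` for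
`t ∈ ℤ_p` and `φ⁺` is right `J`-invariant, each of the `p` summands equals `φ⁺(g)` once `φ⁺` is
right invariant under `w_s`, `s = s_i`. That follows from `w_σ J w_s ⊆ B₀ W J`, where `B₀ ⊆ B`
consists of the matrices with unit diagonal, on which `χδ_B` is trivial. Write `j = x_i(c) j'`
with `c ∈ ℤ_p` and `j'_{i,i+1} = 0`, so that `w_s j' w_s ∈ J`; it remains to decompose
`w_σ x_i(c) w_s`. If `σ(i) < σ(i+1)` then `w_σ x_i(c) w_σ⁻¹ ∈ B₀`; otherwise `w_s x_i(c) w_s` is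
lower unipotent, lying in `J` when `|c| < 1`, and for `|c| = 1` the Bruhat decomposition of a
lower unipotent of `SL₂` puts it in `B₀ w_s J`.

That `J` is a group whose diagonal entries are units comes from its description as the preimage
in `GL_n(ℤ_p)` of the upper triangular matrices over `𝔽_p`.
-/

variable {p n}

section UpperTriangular

theorem Matrix.IsUpperTriangular.mul_apply_self {R m : Type*} [NonUnitalNonAssocSemiring R]
    [Fintype m] [LinearOrder m] {M N : Matrix m m R} (hM : M.IsUpperTriangular)
    (hN : N.IsUpperTriangular) (a : m) : (M * N) a a = M a a * N a a := by
  rw [mul_apply, Finset.sum_eq_single a]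
  · intro k _ hk
    rcases lt_or_gt_of_ne hk with hka | hak
    · rw [hM hka, zero_mul]
    · rw [hN hak, mul_zero]
  · simp

variable (R m : Type*) [CommRing R] [Fintype m] [DecidableEq m] [LinearOrder m]

def upperTriangularGL : Subgroup (GL m R) where
  carrier := {g | (g : Matrix m m R).IsUpperTriangular}
  one_mem' := blockTriangular_one
  mul_mem' := BlockTriangular.mul
  inv_mem' {g} hg := by
    let := g.invertible
    simpa only [Set.mem_ofPred_eq, coe_units_inv] using blockTriangular_inv_of_blockTriangular hg

variable {R m}

theorem isUnit_apply_self_of_mem_upperTriangularGL {g : GL m R}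
    (hg : g ∈ upperTriangularGL R m) (a : m) : IsUnit ((g : Matrix m m R) a a) := by
  have hdet : IsUnit (g : Matrix m m R).det := (Matrix.GeneralLinearGroup.det g).isUnit
  rw [det_of_isUpperTriangular hg] at hdet
  exact isUnit_of_dvd_unit
    (Finset.dvd_prod_of_mem (fun i => (g : Matrix m m R) i i) (Finset.mem_univ a)) hdet

end UpperTriangular

theorem PadicInt.toZMod_eq_zero_iff {z : ℤ_[p]} : PadicInt.toZMod z = 0 ↔ ‖z‖ < 1 := by
  rw [← RingHom.mem_ker, PadicInt.ker_toZMod, IsLocalRing.mem_maximalIdeal,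
    PadicInt.mem_nonunits]

theorem Padic.valuation_eq_zero_of_norm_eq_one {x : ℚ_[p]} (hx : ‖x‖ = 1) :
    x.valuation = 0 := by
  have h₁ := (Padic.norm_le_one_iff_val_nonneg x).mp hx.le
  have h₂ := (Padic.norm_le_one_iff_val_nonneg x⁻¹).mp (by rw [norm_inv, hx, inv_one])
  rw [Padic.valuation_inv] at h₂
  omega

section Iwahori

open Matrix.GeneralLinearGroup

theorem Jset_eq_map : Jset p n = ((upperTriangularGL (ZMod p) (Fin n)).comap
    (map (n := Fin n) PadicInt.toZMod)).map (map (PadicInt.Coe.ringHom (p := p))) := by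
  ext g
  constructor
  · rintro ⟨hg, hginv, hlow⟩
    let ι := RingHom.mapMatrix (m := Fin n) (PadicInt.Coe.ringHom (p := p))
    have hι : Function.Injective ι := Matrix.map_injective Subtype.val_injective
    let A : Matrix (Fin n) (Fin n) ℤ_[p] := Matrix.of fun k l => ⟨entry p n g k l, hg k l⟩
    let B : Matrix (Fin n) (Fin n) ℤ_[p] := Matrix.of fun k l => ⟨entry p n g⁻¹ k l, hginv k l⟩
    have hA : ι A = g := rfl
    have hB : ι B = ↑g⁻¹ := rfl
    have hAB : A * B = 1 := hι <| by
      rw [map_mul, map_one, hA, hB, ← Units.val_mul, mul_inv_cancel, Units.val_one]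
    have hBA : B * A = 1 := hι <| by
      rw [map_mul, map_one, hA, hB, ← Units.val_mul, inv_mul_cancel, Units.val_one]
    exact ⟨⟨A, B, hAB, hBA⟩, fun k l hlk => PadicInt.toZMod_eq_zero_iff.mpr (hlow k l hlk),
      Units.ext hA⟩
  · rintro ⟨G, hG, rfl⟩
    refine ⟨fun k l => (G.1 k l).norm_le_one, fun k l => ?_, fun k l hlk => ?_⟩
    · rw [← map_inv]
      exact ((G⁻¹).1 k l).norm_le_one
    · exact PadicInt.toZMod_eq_zero_iff.mp (hG hlk)

variable (p n) in
noncomputable def iwahori : Subgroup (GL (Fin n) ℚ_[p]) :=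
  (((upperTriangularGL (ZMod p) (Fin n)).comap (map PadicInt.toZMod)).map
    (map PadicInt.Coe.ringHom)).copy (Jset p n) Jset_eq_map

theorem norm_entry_self_of_mem_Jset {g : GL (Fin n) ℚ_[p]} (hg : g ∈ Jset p n) (a : Fin n) :
    ‖entry p n g a a‖ = 1 := by
  rw [Jset_eq_map] at hg
  obtain ⟨G, hG, rfl⟩ := hg
  have hunit := (isUnit_apply_self_of_mem_upperTriangularGL hG a).ne_zero
  rw [GeneralLinearGroup.map_apply, ne_eq, PadicInt.toZMod_eq_zero_iff, not_lt] at hunit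
  exact le_antisymm (G.1 a a).norm_le_one hunit

end Iwahori

section PermutationMatrices

theorem coe_permGL (σ : Equiv.Perm (Fin n)) :
    (permGL p n σ : Matrix (Fin n) (Fin n) ℚ_[p]) = σ⁻¹.permMatrix ℚ_[p] :=
  transpose_permMatrix σ

theorem permGL_mul (σ τ : Equiv.Perm (Fin n)) :
    permGL p n σ * permGL p n τ = permGL p n (σ * τ) := by
  ext1
  simp only [Units.val_mul, coe_permGL, _root_.mul_inv_rev, permMatrix_mul]

theorem permGL_one : permGL p n 1 = 1 := by
  ext1
  simp [coe_permGL]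

theorem permGL_inv (σ : Equiv.Perm (Fin n)) : (permGL p n σ)⁻¹ = permGL p n σ⁻¹ :=
  inv_eq_of_mul_eq_one_right (by rw [permGL_mul, mul_inv_cancel, permGL_one])

theorem permGL_swap_mul_self (a b : Fin n) :
    permGL p n (Equiv.swap a b) * permGL p n (Equiv.swap a b) = 1 := by
  rw [permGL_mul, Equiv.swap_mul_self, permGL_one]

theorem inv_permGL_swap (a b : Fin n) :
    (permGL p n (Equiv.swap a b))⁻¹ = permGL p n (Equiv.swap a b) :=
  inv_eq_of_mul_eq_one_right (permGL_swap_mul_self a b)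

theorem entry_permGL (π : Equiv.Perm (Fin n)) (k l : Fin n) :
    entry p n (permGL p n π) k l = if k = π l then 1 else 0 := by
  simp [entry, coe_permGL, PEquiv.toMatrix_apply, Equiv.Perm.inv_def, Equiv.symm_apply_eq]

theorem entry_permGL_mul_mul_permGL (π ρ : Equiv.Perm (Fin n)) (X : GL (Fin n) ℚ_[p])
    (a b : Fin n) :
    entry p n (permGL p n π * X * permGL p n ρ) a b = entry p n X (π⁻¹ a) (ρ b) := by
  simp [entry, coe_permGL, PEquiv.toMatrix_toPEquiv_mul, PEquiv.mul_toMatrix_toPEquiv,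
    Equiv.Perm.inv_def]

theorem entry_permGL_mul (π : Equiv.Perm (Fin n)) (X : GL (Fin n) ℚ_[p]) (a b : Fin n) :
    entry p n (permGL p n π * X) a b = entry p n X (π⁻¹ a) b := by
  simpa [permGL_one] using entry_permGL_mul_mul_permGL π 1 X a b

theorem entry_mul_permGL (π : Equiv.Perm (Fin n)) (X : GL (Fin n) ℚ_[p]) (a b : Fin n) :
    entry p n (X * permGL p n π) a b = entry p n X a (π b) := by
  simpa [permGL_one] using entry_permGL_mul_mul_permGL 1 π X a b

theorem entry_conj_permGL (π : Equiv.Perm (Fin n)) (X : GL (Fin n) ℚ_[p]) (a b : Fin n) :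
    entry p n (permGL p n π * X * (permGL p n π)⁻¹) a b = entry p n X (π⁻¹ a) (π⁻¹ b) := by
  rw [permGL_inv, entry_permGL_mul_mul_permGL]

theorem conj_permGL_mem_Jset {π : Equiv.Perm (Fin n)} {u : GL (Fin n) ℚ_[p]}
    (hu : u ∈ Jset p n) (h : ∀ k l, π l < π k → ‖entry p n u k l‖ < 1) :
    permGL p n π * u * (permGL p n π)⁻¹ ∈ Jset p n := by
  refine ⟨fun a b => ?_, fun a b => ?_, fun a b hba => ?_⟩
  · rw [entry_conj_permGL]
    exact hu.1 _ _
  · rw [conj_inv, entry_conj_permGL]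
    exact hu.2.1 _ _
  · rw [entry_conj_permGL]
    exact h _ _ (by simpa using hba)

theorem conj_permGL_mem_Bset {π : Equiv.Perm (Fin n)} {M : GL (Fin n) ℚ_[p]}
    (h : ∀ k l, π l < π k → entry p n M k l = 0) :
    permGL p n π * M * (permGL p n π)⁻¹ ∈ Bset p n := by
  intro a b hba
  rw [entry_conj_permGL]
  exact h _ _ (by simpa using hba)

theorem lt_or_eq_of_swap_finSucc_lt {i : Fin n} (h : (i : ℕ) + 1 < n) {k l : Fin n}
    (hlk : Equiv.swap i (finSucc n i h) l < Equiv.swap i (finSucc n i h) k) :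
    l < k ∨ (k = i ∧ l = finSucc n i h) := by
  have hi' : (finSucc n i h : ℕ) = i + 1 := rfl
  generalize finSucc n i h = i' at hlk hi' ⊢
  rw [Equiv.swap_apply_def, Equiv.swap_apply_def] at hlk
  split_ifs at hlk <;> simp only [Fin.lt_def, Fin.ext_iff] at * <;> omega

end PermutationMatrices

section ElementaryMatrices

theorem coe_elemGL {a b : Fin n} (hab : a ≠ b) (c : ℚ_[p]) :
    (elemGL p n a b hab c : Matrix (Fin n) (Fin n) ℚ_[p]) = 1 + single a b c :=
  rfl

theorem entry_elemGL {a b : Fin n} (hab : a ≠ b) (c : ℚ_[p]) (k l : Fin n) :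
    entry p n (elemGL p n a b hab c) k l =
      (1 : Matrix (Fin n) (Fin n) ℚ_[p]) k l + single a b c k l :=
  rfl

theorem entry_elemGL_self {a b : Fin n} (hab : a ≠ b) (c : ℚ_[p]) (k : Fin n) :
    entry p n (elemGL p n a b hab c) k k = 1 := by
  rw [entry_elemGL, one_apply_eq, single_apply, if_neg fun h => hab (h.1.trans h.2.symm),
    add_zero]

theorem entry_elemGL_mul {a b : Fin n} (hab : a ≠ b) (c : ℚ_[p]) (X : GL (Fin n) ℚ_[p])
    (k l : Fin n) : entry p n (elemGL p n a b hab c * X) k l =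
      entry p n X k l + if k = a then c * entry p n X b l else 0 := by
  simp only [entry, Units.val_mul, coe_elemGL, add_mul, one_mul, Matrix.add_apply]
  split_ifs with hk
  · rw [hk, single_mul_apply_same]
  · rw [single_mul_apply_of_ne _ _ _ _ _ hk]

theorem entry_mul_elemGL {a b : Fin n} (hab : a ≠ b) (c : ℚ_[p]) (X : GL (Fin n) ℚ_[p])
    (k l : Fin n) : entry p n (X * elemGL p n a b hab c) k l =
      entry p n X k l + if l = b then entry p n X k a * c else 0 := by
  simp only [entry, Units.val_mul, coe_elemGL, mul_add, mul_one, Matrix.add_apply]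
  split_ifs with hl
  · rw [hl, mul_single_apply_same]
  · rw [mul_single_apply_of_ne _ _ _ _ _ hl]

theorem elemGL_mul_elemGL {a b : Fin n} (hab : a ≠ b) (c d : ℚ_[p]) :
    elemGL p n a b hab c * elemGL p n a b hab d = elemGL p n a b hab (c + d) :=
  Units.ext (transvection_mul_transvection_same a b hab c d)

theorem elemGL_zero {a b : Fin n} (hab : a ≠ b) : elemGL p n a b hab 0 = 1 :=
  Units.ext (transvection_zero a b)

theorem elemGL_mem_Jset {a b : Fin n} (hab : a ≠ b) {c : ℚ_[p]} (hc : ‖c‖ ≤ 1)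
    (hlt : b < a → ‖c‖ < 1) : elemGL p n a b hab c ∈ Jset p n := by
  have hint : ∀ d : ℚ_[p], ‖d‖ ≤ 1 → ∀ k l, ‖entry p n (elemGL p n a b hab d) k l‖ ≤ 1 := by
    intro d hd k l
    rw [entry_elemGL, one_apply, single_apply]
    split_ifs <;> simp_all
  have hinv : (elemGL p n a b hab c)⁻¹ = elemGL p n a b hab (-c) :=
    inv_eq_of_mul_eq_one_right (by rw [elemGL_mul_elemGL, add_neg_cancel, elemGL_zero])
  refine ⟨hint c hc, hinv ▸ hint (-c) (by rwa [norm_neg]), fun k l hlk => ?_⟩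
  rw [entry_elemGL, one_apply_ne hlk.ne', single_apply]
  split_ifs with h
  · obtain ⟨rfl, rfl⟩ := h
    simpa using hlt hlk
  · simp

theorem exists_elemGL_mul_eq {u : GL (Fin n) ℚ_[p]} (hu : u ∈ Jset p n) {a b : Fin n}
    (hab : a < b) : ∃ c : ℚ_[p], ‖c‖ ≤ 1 ∧ ∃ u' ∈ Jset p n,
      entry p n u' a b = 0 ∧ u = elemGL p n a b hab.ne c * u' := by
  have hbb := norm_entry_self_of_mem_Jset hu b
  have hbb₀ : entry p n u b b ≠ 0 := norm_ne_zero_iff.mp (by rw [hbb]; exact one_ne_zero)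
  set c := entry p n u a b / entry p n u b b
  have hc : ‖c‖ ≤ 1 := by
    rw [norm_div, hbb, div_one]
    exact hu.1 a b
  refine ⟨c, hc, elemGL p n a b hab.ne (-c) * u,
    (iwahori p n).mul_mem (elemGL_mem_Jset hab.ne (by rwa [norm_neg]) fun hba =>
      absurd hab (not_lt.mpr hba.le)) hu, ?_, ?_⟩
  · rw [entry_elemGL_mul, if_pos rfl, neg_mul, div_mul_cancel₀ _ hbb₀, add_neg_cancel]
  · rw [← mul_assoc, elemGL_mul_elemGL, add_neg_cancel, elemGL_zero, one_mul]

end ElementaryMatrices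

section Cells

theorem Equiv.Perm.eq_of_forall_apply_le {σ τ : Equiv.Perm (Fin n)} (h : ∀ a, τ a ≤ σ a) :
    τ = σ := by
  have hsum : ∑ a, (τ a : ℕ) = ∑ a, (σ a : ℕ) := by
    rw [Equiv.sum_comp τ (fun a => (a : ℕ)), Equiv.sum_comp σ (fun a => (a : ℕ))]
  ext a
  exact (Finset.sum_eq_sum_iff_of_le fun a _ => Fin.le_iff_val_le_val.mp (h a)).mp hsum a
    (Finset.mem_univ a)

theorem perm_eq_of_mul_permGL_mul_eq {b b' j j' : GL (Fin n) ℚ_[p]} {σ τ : Equiv.Perm (Fin n)}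
    (hb : b ∈ Bset p n) (hb' : b' ∈ Bset p n) (hj : j ∈ Jset p n) (hj' : j' ∈ Jset p n)
    (heq : b * permGL p n σ * j = b' * permGL p n τ * j') : σ = τ := by
  have hc : b'⁻¹ * b ∈ Bset p n := (upperTriangularGL ℚ_[p] (Fin n)).mul_mem
    ((upperTriangularGL ℚ_[p] (Fin n)).inv_mem hb') hb
  have hu : j' * j⁻¹ ∈ Jset p n := (iwahori p n).mul_mem hj' ((iwahori p n).inv_mem hj)
  have hrel : b'⁻¹ * b * permGL p n σ = permGL p n τ * (j' * j⁻¹) := by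
    calc b'⁻¹ * b * permGL p n σ = b'⁻¹ * (b * permGL p n σ * j) * j⁻¹ := by group
      _ = permGL p n τ * (j' * j⁻¹) := by rw [heq]; group
  refine (Equiv.Perm.eq_of_forall_apply_le fun a => not_lt.mp fun hlt => ?_).symm
  have hentry := congrArg (fun g => entry p n g (τ a) a) hrel
  simp only [entry_mul_permGL, entry_permGL_mul, Equiv.Perm.coe_inv, Equiv.symm_apply_apply,
    hc _ _ hlt] at hentry
  have := norm_entry_self_of_mem_Jset hu a
  rw [← hentry, norm_zero] at this
  exact zero_ne_one this

variable (p n) in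
def unitBorelCells : Set (GL (Fin n) ℚ_[p]) :=
  {g | ∃ b ∈ Bset p n, (∀ a, ‖entry p n b a a‖ = 1) ∧
    ∃ τ : Equiv.Perm (Fin n), ∃ j ∈ Jset p n, g = b * permGL p n τ * j}

theorem mul_mem_unitBorelCells {g j : GL (Fin n) ℚ_[p]} (hg : g ∈ unitBorelCells p n)
    (hj : j ∈ Jset p n) : g * j ∈ unitBorelCells p n := by
  obtain ⟨b, hb, hbdiag, τ, j', hj', rfl⟩ := hg
  exact ⟨b, hb, hbdiag, τ, j' * j, (iwahori p n).mul_mem hj' hj, by group⟩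

theorem permGL_mul_elemGL_mul_swap_mem_of_lt {a b : Fin n} (hab : a ≠ b)
    {σ : Equiv.Perm (Fin n)} (hσ : σ a < σ b) (c : ℚ_[p]) :
    permGL p n σ * elemGL p n a b hab c * permGL p n (Equiv.swap a b) ∈ unitBorelCells p n := by
  refine ⟨permGL p n σ * elemGL p n a b hab c * (permGL p n σ)⁻¹,
    conj_permGL_mem_Bset fun k l hlk => ?_, fun k => ?_, σ * Equiv.swap a b, 1,
    (iwahori p n).one_mem, by rw [← permGL_mul]; group⟩
  · rw [entry_elemGL, one_apply_ne (ne_of_apply_ne σ hlk.ne'), zero_add, single_apply]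
    split_ifs with h
    · obtain ⟨rfl, rfl⟩ := h
      exact absurd hσ (lt_asymm hlk)
    · rfl
  · rw [entry_conj_permGL, entry_elemGL_self]
    exact norm_one

theorem permGL_mul_elemGL_mul_swap_mem_of_norm_lt_one {a b : Fin n} (hab : a ≠ b)
    (σ : Equiv.Perm (Fin n)) {c : ℚ_[p]} (hc : ‖c‖ < 1) :
    permGL p n σ * elemGL p n a b hab c * permGL p n (Equiv.swap a b) ∈ unitBorelCells p n := by
  have hsmall : ∀ k l, Equiv.swap a b l < Equiv.swap a b k →
      ‖entry p n (elemGL p n a b hab c) k l‖ < 1 := by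
    intro k l hlk
    rw [entry_elemGL, one_apply_ne (ne_of_apply_ne _ hlk.ne'), zero_add, single_apply]
    split_ifs
    · exact hc
    · simp
  have hj : (permGL p n (Equiv.swap a b))⁻¹ * elemGL p n a b hab c
      * permGL p n (Equiv.swap a b) ∈ Jset p n := by
    simpa only [inv_permGL_swap] using
      conj_permGL_mem_Jset (elemGL_mem_Jset hab hc.le fun _ => hc) hsmall
  refine ⟨1, (upperTriangularGL ℚ_[p] (Fin n)).one_mem, fun k => ?_, σ * Equiv.swap a b, _, hj,
    by rw [← permGL_mul]; group⟩
  simp [entry]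

/-- With `M = x_{ab}(c) w_{(a b)} x_{ab}(-c⁻¹)` we have
`w_σ x_{ab}(c) w_{(a b)} = (w_σ M w_σ⁻¹) w_σ x_{ab}(c⁻¹)`; on the rows and columns `a, b` the
matrix `M` is `!![c, 0; 1, -c⁻¹]`, triangular for the order in which `σ b < σ a`. -/
theorem permGL_mul_elemGL_mul_swap_mem_of_norm_eq_one {a b : Fin n} (hab : a < b)
    {σ : Equiv.Perm (Fin n)} (hσ : σ b < σ a) {c : ℚ_[p]} (hc : ‖c‖ = 1) :
    permGL p n σ * elemGL p n a b hab.ne c * permGL p n (Equiv.swap a b)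
      ∈ unitBorelCells p n := by
  have hc₀ : c ≠ 0 := norm_ne_zero_iff.mp (by rw [hc]; exact one_ne_zero)
  set M := elemGL p n a b hab.ne c * permGL p n (Equiv.swap a b) * elemGL p n a b hab.ne (-c⁻¹)
  refine ⟨permGL p n σ * M * (permGL p n σ)⁻¹, conj_permGL_mem_Bset fun k l hlk => ?_,
    fun k => ?_, σ, elemGL p n a b hab.ne c⁻¹,
    elemGL_mem_Jset hab.ne (by rw [norm_inv, hc, inv_one]) fun hba => absurd hab hba.not_gt, ?_⟩
  · simp only [M, entry_mul_elemGL, entry_elemGL_mul, entry_permGL, Equiv.swap_apply_def]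
    split_ifs <;> simp_all
    order
  · simp only [entry_conj_permGL, M, entry_mul_elemGL, entry_elemGL_mul, entry_permGL,
      Equiv.swap_apply_def]
    split_ifs <;> simp_all
  · simp only [M, mul_assoc, inv_mul_cancel_left, elemGL_mul_elemGL, neg_add_cancel, elemGL_zero,
      mul_one]

theorem permGL_mul_elemGL_mul_swap_mem {a b : Fin n} (hab : a < b) (σ : Equiv.Perm (Fin n))
    {c : ℚ_[p]} (hc : ‖c‖ ≤ 1) :
    permGL p n σ * elemGL p n a b hab.ne c * permGL p n (Equiv.swap a b) ∈ unitBorelCells p n := by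
  rcases lt_or_gt_of_ne (σ.injective.ne hab.ne) with hσ | hσ
  · exact permGL_mul_elemGL_mul_swap_mem_of_lt hab.ne hσ c
  · rcases hc.lt_or_eq with hc | hc
    · exact permGL_mul_elemGL_mul_swap_mem_of_norm_lt_one hab.ne σ hc
    · exact permGL_mul_elemGL_mul_swap_mem_of_norm_eq_one hab hσ hc

theorem permGL_mul_mul_swap_mem {i : Fin n} (h : (i : ℕ) + 1 < n) (σ : Equiv.Perm (Fin n))
    {u : GL (Fin n) ℚ_[p]} (hu : u ∈ Jset p n) :
    permGL p n σ * u * permGL p n (Equiv.swap i (finSucc n i h)) ∈ unitBorelCells p n := by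
  have hii' : i < finSucc n i h := Fin.lt_def.mpr (Nat.lt_succ_self _)
  obtain ⟨c, hc, u', hu', hu'₀, rfl⟩ := exists_elemGL_mul_eq hu hii'
  have hsmall : ∀ k l, Equiv.swap i (finSucc n i h) l < Equiv.swap i (finSucc n i h) k →
      ‖entry p n u' k l‖ < 1 := by
    intro k l hlk
    rcases lt_or_eq_of_swap_finSucc_lt h hlk with hlk | ⟨rfl, rfl⟩
    · exact hu'.2.2 k l hlk
    · simp [hu'₀]
  have hconj : (permGL p n (Equiv.swap i (finSucc n i h)))⁻¹ * u'
      * permGL p n (Equiv.swap i (finSucc n i h)) ∈ Jset p n := by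
    simpa only [inv_permGL_swap] using conj_permGL_mem_Jset hu' hsmall
  convert mul_mem_unitBorelCells (permGL_mul_elemGL_mul_swap_mem hii' σ hc) hconj using 1
  group

end Cells

section Character

theorem chiDelta_mul (z : Fin n → ℂˣ) {b b' : GL (Fin n) ℚ_[p]}
    (hb : b ∈ Bset p n) (hb' : b' ∈ Bset p n) :
    chiDelta p n z (b * b') = chiDelta p n z b * chiDelta p n z b' := by
  have hdiag₀ : ∀ {g : GL (Fin n) ℚ_[p]}, g ∈ Bset p n → ∀ a, entry p n g a a ≠ 0 :=
    fun hg a => (isUnit_apply_self_of_mem_upperTriangularGL hg a).ne_zero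
  have hp₀ : (p : ℂ) ≠ 0 := Nat.cast_ne_zero.mpr (Fact.out : p.Prime).ne_zero
  simp only [chiDelta, ← Finset.prod_mul_distrib]
  refine Finset.prod_congr rfl fun a _ => ?_
  have hmul : entry p n (b * b') a a = entry p n b a a * entry p n b' a a :=
    IsUpperTriangular.mul_apply_self hb hb' a
  rw [hmul, Padic.valuation_mul (hdiag₀ hb a) (hdiag₀ hb' a), zpow_add₀ (z a).ne_zero, mul_add,
    zpow_add₀ hp₀]
  ring

theorem chiDelta_eq_one (z : Fin n → ℂˣ) {b : GL (Fin n) ℚ_[p]}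
    (hb : ∀ a, ‖entry p n b a a‖ = 1) : chiDelta p n z b = 1 :=
  Finset.prod_eq_one fun a _ => by simp [Padic.valuation_eq_zero_of_norm_eq_one (hb a)]

theorem exists_mul_permGL_mul_mul_swap_eq (z : Fin n → ℂˣ) {b j : GL (Fin n) ℚ_[p]}
    (hb : b ∈ Bset p n) (σ : Equiv.Perm (Fin n)) (hj : j ∈ Jset p n) {i : Fin n}
    (h : (i : ℕ) + 1 < n) : ∃ b' ∈ Bset p n, chiDelta p n z b' = chiDelta p n z b ∧
      ∃ τ, ∃ j' ∈ Jset p n, b * permGL p n σ * j * permGL p n (Equiv.swap i (finSucc n i h))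
        = b' * permGL p n τ * j' := by
  obtain ⟨b', hb', hb'₁, τ, j', hj', heq⟩ := permGL_mul_mul_swap_mem h σ hj
  refine ⟨b * b', (upperTriangularGL ℚ_[p] (Fin n)).mul_mem hb hb',
    by rw [chiDelta_mul z hb hb', chiDelta_eq_one z hb'₁, mul_one], τ, j', hj', ?_⟩
  simp only [mul_assoc] at heq ⊢
  rw [heq]

end Character

variable (p n) in
structure IsCasselmanBasis (z : Fin n → ℂˣ) (f : Equiv.Perm (Fin n) → GL (Fin n) ℚ_[p] → ℂ) :
    Prop where
  apply_eq_zero : ∀ σ g, (¬ ∃ b ∈ Bset p n, ∃ j ∈ Jset p n, g = b * permGL p n σ * j) →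
    f σ g = 0
  apply_permGL : ∀ σ, f σ (permGL p n σ) = 1
  apply_mul_mul : ∀ σ, ∀ b ∈ Bset p n, ∀ g, ∀ j ∈ Jset p n,
    f σ (b * g * j) = chiDelta p n z b * f σ g

namespace IsCasselmanBasis

variable {z : Fin n → ℂˣ} {f : Equiv.Perm (Fin n) → GL (Fin n) ℚ_[p] → ℂ}

theorem sum_apply_mul_permGL_mul (hf : IsCasselmanBasis p n z f) {b j : GL (Fin n) ℚ_[p]}
    (hb : b ∈ Bset p n) (σ : Equiv.Perm (Fin n)) (hj : j ∈ Jset p n) :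
    ∑ τ, f τ (b * permGL p n σ * j) = chiDelta p n z b := by
  rw [Finset.sum_eq_single σ, hf.apply_mul_mul σ b hb _ j hj, hf.apply_permGL, mul_one]
  · rintro τ - hτ
    refine hf.apply_eq_zero τ _ fun ⟨b', hb', j', hj', heq⟩ => hτ ?_
    exact perm_eq_of_mul_permGL_mul_eq hb' hb hj' hj heq.symm
  · simp

theorem sum_apply_eq_zero (hf : IsCasselmanBasis p n z f) {x : GL (Fin n) ℚ_[p]}
    (hx : ¬ ∃ b ∈ Bset p n, ∃ σ, ∃ j ∈ Jset p n, x = b * permGL p n σ * j) :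
    ∑ τ, f τ x = 0 :=
  Finset.sum_eq_zero fun τ _ =>
    hf.apply_eq_zero τ x fun ⟨b, hb, j, hj, heq⟩ => hx ⟨b, hb, τ, j, hj, heq⟩

theorem sum_apply_mul_of_mem_Jset (hf : IsCasselmanBasis p n z f) (x : GL (Fin n) ℚ_[p])
    {j : GL (Fin n) ℚ_[p]} (hj : j ∈ Jset p n) : ∑ τ, f τ (x * j) = ∑ τ, f τ x := by
  refine Finset.sum_congr rfl fun τ _ => ?_
  have := hf.apply_mul_mul τ 1 (upperTriangularGL ℚ_[p] (Fin n)).one_mem x j hj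
  rwa [one_mul, chiDelta_eq_one z fun a => by simp [entry], one_mul] at this

theorem sum_apply_mul_permGL_swap (hf : IsCasselmanBasis p n z f) {i : Fin n}
    (h : (i : ℕ) + 1 < n) (x : GL (Fin n) ℚ_[p]) :
    ∑ τ, f τ (x * permGL p n (Equiv.swap i (finSucc n i h))) = ∑ τ, f τ x := by
  by_cases hx : ∃ b ∈ Bset p n, ∃ σ, ∃ j ∈ Jset p n, x = b * permGL p n σ * j
  · obtain ⟨b, hb, σ, j, hj, rfl⟩ := hx
    obtain ⟨b', hb', hχ, τ, j', hj', heq⟩ := exists_mul_permGL_mul_mul_swap_eq z hb σ hj h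
    rw [heq, hf.sum_apply_mul_permGL_mul hb' τ hj', hf.sum_apply_mul_permGL_mul hb σ hj, hχ]
  · have hxw : ¬ ∃ b ∈ Bset p n, ∃ σ, ∃ j ∈ Jset p n,
        x * permGL p n (Equiv.swap i (finSucc n i h)) = b * permGL p n σ * j := by
      rintro ⟨b, hb, σ, j, hj, heq⟩
      obtain ⟨b', hb', -, τ, j', hj', heq'⟩ := exists_mul_permGL_mul_mul_swap_eq z hb σ hj h
      refine hx ⟨b', hb', τ, j', hj', ?_⟩
      rw [← heq', ← heq, mul_assoc, permGL_swap_mul_self, mul_one]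
    rw [hf.sum_apply_eq_zero hx, hf.sum_apply_eq_zero hxw]

end IsCasselmanBasis

theorem phiPlus_hecke_eigenvector_general
    (z : Fin n → ℂˣ)
    (f : Equiv.Perm (Fin n) → GL (Fin n) ℚ_[p] → ℂ)
    (hsupp : ∀ (σ : Equiv.Perm (Fin n)) (g : GL (Fin n) ℚ_[p]),
      (¬ ∃ b ∈ Bset p n, ∃ j ∈ Jset p n, g = b * permGL p n σ * j) → f σ g = 0)
    (hnorm : ∀ σ : Equiv.Perm (Fin n), f σ (permGL p n σ) = 1)
    (hequiv : ∀ (σ : Equiv.Perm (Fin n)), ∀ b ∈ Bset p n, ∀ (g : GL (Fin n) ℚ_[p]),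
      ∀ j ∈ Jset p n, f σ (b * g * j) = chiDelta p n z b * f σ g)
    (φ : GL (Fin n) ℚ_[p] → ℂ)
    (hφ : ∀ g : GL (Fin n) ℚ_[p], φ g = ∑ σ : Equiv.Perm (Fin n), f σ g)
    (i : Fin n) (h : (i : ℕ) + 1 < n) (g : GL (Fin n) ℚ_[p]) :
    ∑ t : Fin p,
      φ (g * elemGL p n i (finSucc n i h) (finSucc_ne n i h) ((t : ℕ) : ℚ_[p])
            * permGL p n (Equiv.swap i (finSucc n i h)))
      = (p : ℂ) * φ g := by
  have hf : IsCasselmanBasis p n z f := ⟨hsupp, hnorm, hequiv⟩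
  obtain rfl : φ = fun g => ∑ σ, f σ g := funext hφ
  have hii' : i < finSucc n i h := Fin.lt_def.mpr (Nat.lt_succ_self _)
  have hsummand (t : Fin p) :
      ∑ σ, f σ (g * elemGL p n i (finSucc n i h) (finSucc_ne n i h) ((t : ℕ) : ℚ_[p])
        * permGL p n (Equiv.swap i (finSucc n i h))) = ∑ σ, f σ g := by
    have ht : ‖((t : ℕ) : ℚ_[p])‖ ≤ 1 := by simpa using Padic.norm_int_le_one (p := p) (t : ℕ)
    rw [hf.sum_apply_mul_permGL_swap, hf.sum_apply_mul_of_mem_Jset _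
      (elemGL_mem_Jset _ ht fun hlt => absurd hii' hlt.not_gt)]
  simp only [hsummand, Finset.sum_const, Finset.card_univ, Fintype.card_fin, nsmul_eq_mul]

/-- `φ⁺(g) = ∑_σ f_σ(g)` is an eigenvector of the Iwahori Hecke operators at the simple
reflections with eigenvalue `p`: `∑_{t=0}^{p-1} φ⁺(g·x_i(t)·w_{s_i}) = p·φ⁺(g)`. -/
theorem phiPlus_hecke_eigenvector (hn : 2 ≤ n)
    (z : Fin n → ℂˣ) (hz : ∏ i : Fin n, z i = 1)
    (f : Equiv.Perm (Fin n) → GL (Fin n) ℚ_[p] → ℂ)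
    (hsupp : ∀ (σ : Equiv.Perm (Fin n)) (g : GL (Fin n) ℚ_[p]),
      (¬ ∃ b ∈ Bset p n, ∃ j ∈ Jset p n, g = b * permGL p n σ * j) → f σ g = 0)
    (hnorm : ∀ σ : Equiv.Perm (Fin n), f σ (permGL p n σ) = 1)
    (hequiv : ∀ (σ : Equiv.Perm (Fin n)), ∀ b ∈ Bset p n, ∀ (g : GL (Fin n) ℚ_[p]),
      ∀ j ∈ Jset p n, f σ (b * g * j) = chiDelta p n z b * f σ g)
    (φ : GL (Fin n) ℚ_[p] → ℂ)
    (hφ : ∀ g : GL (Fin n) ℚ_[p], φ g = ∑ σ : Equiv.Perm (Fin n), f σ g)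
    (i : Fin n) (h : (i : ℕ) + 1 < n) (g : GL (Fin n) ℚ_[p]) :
    ∑ t : Fin p,
      φ (g * elemGL p n i (finSucc n i h) (finSucc_ne n i h) ((t : ℕ) : ℚ_[p])
            * permGL p n (Equiv.swap i (finSucc n i h)))
      = (p : ℂ) * φ g :=
  phiPlus_hecke_eigenvector_general z f hsupp hnorm hequiv φ hφ i h g
end

section
/- For every σ ∈ S_n, the double coset J·d_σ·w_σ·J is contained in N⁻_p·d_σ·w_σ·J; that is, every element of J·d_σ·w_σ·J can be written as l·d_σ·w_σ·j, where l is a lower unitriangular matrix whose entries strictly below the diagonal lie in pℤ_p and j ∈ J. -/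
open Matrix MeasureTheory Pointwise

variable (p n : ℕ) [Fact p.Prime]

/-!
Gaussian elimination inside `J`, column by column, factors any `a ∈ J` as `a = l * u` with
`l ∈ N⁻_p` and `u ∈ J` upper triangular; the pivots are units because modulo `p` an element of
`J` is upper triangular and invertible. Then `a * W * b = l * W * (W⁻¹ * u * W) * b` for
`W = d_σ w_σ`, and `(W⁻¹ u W)_{ij} = p^{μ_{σ j} - μ_{σ i}} u_{σ i, σ j}`. The recursion defining
`μ` makes `k ↦ (μ_k, σ⁻¹ k)` strictly increasing for the lexicographic order, so on the support
`σ i ≤ σ j` of `u` the exponent is `≥ 0`, and `≥ 1` when moreover `j < i`: the conjugate lies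
in `J`.
-/

theorem IsUltrametricDist.norm_sum_lt_of_forall_lt {M ι : Type*} [SeminormedAddCommGroup M]
    [IsUltrametricDist M] {s : Finset ι} {f : ι → M} {C : ℝ} (hC : 0 < C)
    (h : ∀ i ∈ s, ‖f i‖ < C) : ‖∑ i ∈ s, f i‖ < C := by
  rcases s.eq_empty_or_nonempty with rfl | hs
  · simpa using hC
  obtain ⟨i, hi, hle⟩ := exists_norm_finsetSum_le_of_nonempty hs f
  exact hle.trans_lt (h i hi)

section ColumnOperation

variable {m R : Type*} [DecidableEq m] [LinearOrder m] [Ring R]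

def colTransvection (c : m) (t : m → R) : Matrix m m R :=
  1 + of fun i j => if j = c ∧ c < i then t i else 0

theorem colTransvection_zero (c : m) : colTransvection c (0 : m → R) = 1 := by
  ext i j
  simp [colTransvection]

variable [Fintype m]

theorem colTransvection_mul_apply (c : m) (t : m → R) (M : Matrix m m R) (i j : m) :
    (colTransvection c t * M) i j = M i j + if c < i then t i * M c j else 0 := by
  rw [colTransvection, Matrix.add_mul, Matrix.one_mul, Matrix.add_apply, mul_apply]
  congr 1
  simp only [of_apply, ite_and, ite_mul, zero_mul, Finset.sum_ite_eq', Finset.mem_univ, if_true]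

theorem colTransvection_mul_colTransvection (c : m) (t t' : m → R) :
    colTransvection c t * colTransvection c t' = colTransvection c (t + t') := by
  ext i j
  rw [colTransvection_mul_apply]
  simp only [colTransvection, Matrix.add_apply, of_apply, one_apply, lt_irrefl, and_false,
    if_false, add_zero, Pi.add_apply]
  rcases eq_or_ne j c with rfl | hj
  · by_cases hi : j < i
    · simp [hi, hi.ne', add_comm]
    · simp [hi]
  · simp [hj, hj.symm]

def colTransvectionGL (c : m) (t : m → R) : GL m R :=
  ⟨colTransvection c t, colTransvection c (-t),
    by rw [colTransvection_mul_colTransvection, add_neg_cancel, colTransvection_zero],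
    by rw [colTransvection_mul_colTransvection, neg_add_cancel, colTransvection_zero]⟩

theorem colTransvectionGL_inv (c : m) (t : m → R) :
    (colTransvectionGL c t)⁻¹ = colTransvectionGL c (-t) :=
  Units.ext rfl

end ColumnOperation

section Iwahori

variable {p n}

/-- The group `N⁻_p`. -/
def NminusPset : Set (GL (Fin n) ℚ_[p]) :=
  {l | (∀ i, entry p n l i i = 1) ∧ (∀ i j : Fin n, i < j → entry p n l i j = 0) ∧
    ∀ i j : Fin n, j < i → ‖entry p n l i j‖ < 1}

theorem entry_mul (g h : GL (Fin n) ℚ_[p]) (i j : Fin n) :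
    entry p n (g * h) i j = ∑ k, entry p n g i k * entry p n h k j :=
  rfl

theorem norm_entry_mul_le_one {g h : GL (Fin n) ℚ_[p]} (hg : ∀ i j, ‖entry p n g i j‖ ≤ 1)
    (hh : ∀ i j, ‖entry p n h i j‖ ≤ 1) (i j : Fin n) : ‖entry p n (g * h) i j‖ ≤ 1 := by
  rw [entry_mul]
  refine IsUltrametricDist.norm_sum_le_of_forall_le_of_nonneg zero_le_one fun k _ => ?_
  rw [norm_mul]
  exact mul_le_one₀ (hg i k) (norm_nonneg _) (hh k j)

theorem norm_entry_mul_lt_one {g h : GL (Fin n) ℚ_[p]} (hg : ∀ i j, ‖entry p n g i j‖ ≤ 1)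
    (hg' : ∀ i j, j < i → ‖entry p n g i j‖ < 1) (hh : ∀ i j, ‖entry p n h i j‖ ≤ 1)
    (hh' : ∀ i j, j < i → ‖entry p n h i j‖ < 1) {i j : Fin n} (hji : j < i) :
    ‖entry p n (g * h) i j‖ < 1 := by
  rw [entry_mul]
  refine IsUltrametricDist.norm_sum_lt_of_forall_lt one_pos fun k _ => ?_
  rw [norm_mul]
  rcases lt_or_ge j k with hjk | hkj
  · exact mul_lt_one_of_nonneg_of_lt_one_right (hg i k) (norm_nonneg _) (hh' k j hjk)
  · exact mul_lt_one_of_nonneg_of_lt_one_left (norm_nonneg _) (hg' i k (hkj.trans_lt hji)) (hh k j)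

theorem mul_mem_Jset {g h : GL (Fin n) ℚ_[p]} (hg : g ∈ Jset p n) (hh : h ∈ Jset p n) :
    g * h ∈ Jset p n := by
  obtain ⟨hg, hg_inv, hg_low⟩ := hg
  obtain ⟨hh, hh_inv, hh_low⟩ := hh
  refine ⟨norm_entry_mul_le_one hg hh, ?_, fun i j => norm_entry_mul_lt_one hg hg_low hh hh_low⟩
  rw [_root_.mul_inv_rev]
  exact norm_entry_mul_le_one hh_inv hg_inv

theorem norm_entry_le_one_of_mem_NminusPset {l : GL (Fin n) ℚ_[p]} (hl : l ∈ NminusPset)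
    (i j : Fin n) : ‖entry p n l i j‖ ≤ 1 := by
  rcases lt_trichotomy i j with h | rfl | h
  · simp [hl.2.1 i j h]
  · simp [hl.1 i]
  · exact (hl.2.2 i j h).le

theorem mul_mem_NminusPset {l l' : GL (Fin n) ℚ_[p]} (hl : l ∈ NminusPset)
    (hl' : l' ∈ NminusPset) : l * l' ∈ NminusPset := by
  refine ⟨fun i => ?_, fun i j hij => ?_, fun i j => norm_entry_mul_lt_one
    (norm_entry_le_one_of_mem_NminusPset hl) hl.2.2
    (norm_entry_le_one_of_mem_NminusPset hl') hl'.2.2⟩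
  · rw [entry_mul, Finset.sum_eq_single i, hl.1, hl'.1, one_mul]
    · intro k _ hki
      rcases hki.lt_or_gt with hki | hik
      · rw [hl'.2.1 k i hki, mul_zero]
      · rw [hl.2.1 i k hik, zero_mul]
    · simp
  · rw [entry_mul]
    refine Finset.sum_eq_zero fun k _ => ?_
    rcases lt_or_ge i k with hik | hki
    · rw [hl.2.1 i k hik, zero_mul]
    · rw [hl'.2.1 k j (hki.trans_lt hij), mul_zero]

theorem mem_Jset_of_mem_NminusPset {l : GL (Fin n) ℚ_[p]} (hl : l ∈ NminusPset)
    (hl_inv : l⁻¹ ∈ NminusPset) : l ∈ Jset p n :=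
  ⟨norm_entry_le_one_of_mem_NminusPset hl, norm_entry_le_one_of_mem_NminusPset hl_inv, hl.2.2⟩

theorem colTransvectionGL_mem_NminusPset (c : Fin n) {t : Fin n → ℚ_[p]}
    (ht : ∀ i, c < i → ‖t i‖ < 1) :
    colTransvectionGL c t ∈ NminusPset := by
  refine ⟨fun i => ?_, fun i j hij => ?_, fun i j hji => ?_⟩ <;>
    simp only [entry, colTransvectionGL, colTransvection, Matrix.add_apply, of_apply, one_apply]
  · rw [if_pos trivial, if_neg fun h => h.2.ne' h.1, add_zero]
  · rw [if_neg hij.ne, zero_add, if_neg fun h : j = c ∧ c < i => hij.asymm (h.1 ▸ h.2)]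
  · rw [if_neg hji.ne', zero_add]
    split_ifs with h
    · exact ht i h.2
    · simp

theorem norm_entry_self_eq_one_of_mem_Jset {g : GL (Fin n) ℚ_[p]} (hg : g ∈ Jset p n)
    (k : Fin n) : ‖entry p n g k k‖ = 1 := by
  obtain ⟨hint, hinv, hlow⟩ := hg
  let toZp (h : GL (Fin n) ℚ_[p]) (hh : ∀ i j, ‖entry p n h i j‖ ≤ 1) :
      Matrix (Fin n) (Fin n) ℤ_[p] := of fun i j => ⟨entry p n h i j, hh i j⟩
  have hcoe : ∀ h hh, (toZp h hh).map PadicInt.Coe.ringHom = (h : Matrix (Fin n) (Fin n) ℚ_[p]) :=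
    fun _ _ => rfl
  set M := toZp g hint
  have hdet : IsUnit M.det := by
    refine isUnit_det_of_right_inverse (B := toZp g⁻¹ hinv)
      (map_injective Subtype.val_injective ?_)
    change (M * _).map PadicInt.Coe.ringHom =
      (1 : Matrix (Fin n) (Fin n) ℤ_[p]).map PadicInt.Coe.ringHom
    rw [Matrix.map_mul, hcoe, hcoe, Matrix.map_one _ (map_zero _) (map_one _), ← Units.val_mul,
      mul_inv_cancel, Units.val_one]
  have hupper : (M.map PadicInt.toZMod).IsUpperTriangular := fun i j hji => by
    change PadicInt.toZMod (M i j) = 0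
    rw [← RingHom.mem_ker, PadicInt.ker_toZMod, IsLocalRing.mem_maximalIdeal, PadicInt.mem_nonunits]
    exact hlow i j hji
  have hdiag : PadicInt.toZMod (M k k) ≠ 0 := by
    have := (hdet.map PadicInt.toZMod).ne_zero
    rw [RingHom.map_det, RingHom.mapMatrix_apply, det_of_isUpperTriangular hupper,
      Finset.prod_ne_zero_iff] at this
    exact this k (Finset.mem_univ k)
  rwa [ne_eq, ← RingHom.mem_ker, PadicInt.ker_toZMod, IsLocalRing.notMem_maximalIdeal,
    PadicInt.isUnit_iff] at hdiag

theorem one_mem_NminusPset : (1 : GL (Fin n) ℚ_[p]) ∈ NminusPset :=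
  ⟨fun i => one_apply_eq i, fun _ _ h => one_apply_ne h.ne, fun _ _ h => by
    simp [entry, one_apply_ne h.ne']⟩

theorem entry_colTransvectionGL_mul (c : Fin n) (t : Fin n → ℚ_[p]) (g : GL (Fin n) ℚ_[p])
    (i j : Fin n) :
    entry p n (colTransvectionGL c t * g) i j =
      entry p n g i j + if c < i then t i * entry p n g c j else 0 :=
  colTransvection_mul_apply c t _ i j

theorem exists_clear_column {u : GL (Fin n) ℚ_[p]} (hu : u ∈ Jset p n) (c : Fin n)
    (hu_prev : ∀ i j, j < i → j < c → entry p n u i j = 0) :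
    ∃ E ∈ NminusPset, E⁻¹ ∈ NminusPset ∧
      ∀ i j, j < i → j ≤ c → entry p n (E * u) i j = 0 := by
  have hcc := norm_entry_self_eq_one_of_mem_Jset hu c
  have hcc0 : entry p n u c c ≠ 0 := norm_ne_zero_iff.mp (by rw [hcc]; exact one_ne_zero)
  set t : Fin n → ℚ_[p] := fun i => -(entry p n u i c / entry p n u c c)
  have ht : ∀ i, c < i → ‖t i‖ < 1 := fun i hi => by
    simpa [t, norm_div, hcc] using hu.2.2 i c hi
  refine ⟨colTransvectionGL c t, colTransvectionGL_mem_NminusPset c ht, ?_, fun i j hji hjc => ?_⟩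
  · rw [colTransvectionGL_inv]
    exact colTransvectionGL_mem_NminusPset c fun i hi => by simpa using ht i hi
  rw [entry_colTransvectionGL_mul]
  rcases hjc.lt_or_eq with hjc | rfl
  · rw [hu_prev i j hji hjc, hu_prev c j hjc hjc, mul_zero, ite_self, add_zero]
  · rw [if_pos hji]
    simp only [t, neg_mul, div_mul_cancel₀ _ hcc0, add_neg_cancel]

theorem exists_NminusPset_mul_cleared {a : GL (Fin n) ℚ_[p]} (ha : a ∈ Jset p n) (k : ℕ) :
    ∃ l ∈ NminusPset, ∃ u ∈ Jset p n, a = l * u ∧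
      ∀ i j : Fin n, j < i → (j : ℕ) < k → entry p n u i j = 0 := by
  induction k with
  | zero =>
    exact ⟨1, one_mem_NminusPset, a, ha, (one_mul a).symm,
      fun _ _ _ h => absurd h (Nat.not_lt_zero _)⟩
  | succ k ih =>
    obtain ⟨l, hl, u, hu, rfl, hcleared⟩ := ih
    by_cases hk : k < n
    · obtain ⟨E, hE, hE_inv, hEu⟩ :=
        exists_clear_column hu ⟨k, hk⟩ fun i j hji hj => hcleared i j hji hj
      refine ⟨l * E⁻¹, mul_mem_NminusPset hl hE_inv, E * u,
        mul_mem_Jset (mem_Jset_of_mem_NminusPset hE hE_inv) hu, by group,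
        fun i j hji hj => hEu i j hji (Nat.lt_succ_iff.mp hj)⟩
    · exact ⟨l, hl, u, hu, rfl, fun i j hji _ => hcleared i j hji (by omega)⟩

theorem exists_NminusPset_mul_upperTriangular {a : GL (Fin n) ℚ_[p]} (ha : a ∈ Jset p n) :
    ∃ l ∈ NminusPset, ∃ u ∈ Jset p n,
      (u : Matrix (Fin n) (Fin n) ℚ_[p]).IsUpperTriangular ∧ a = l * u := by
  obtain ⟨l, hl, u, hu, rfl, hcleared⟩ := exists_NminusPset_mul_cleared ha n
  exact ⟨l, hl, u, hu, fun i j hji => hcleared i j hji j.isLt, rfl⟩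

theorem strictMono_toLex_exponent (σ : Equiv.Perm (Fin n)) (m : Fin n → ℤ)
    (hmrec : ∀ (k : Fin n) (hk : (k : ℕ) + 1 < n),
      m k = m (finSucc n k hk) - if σ⁻¹ (finSucc n k hk) < σ⁻¹ k then 1 else 0) :
    StrictMono fun k => toLex (m k, σ⁻¹ k) := by
  cases n with
  | zero => exact fun a => a.elim0
  | succ n =>
    refine Fin.strictMono_iff_lt_succ.2 fun k => ?_
    have hk := hmrec k.castSucc (by simp)
    change m k.castSucc = m k.succ - if σ⁻¹ k.succ < σ⁻¹ k.castSucc then 1 else 0 at hk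
    rw [Prod.Lex.lt_iff]
    split_ifs at hk with h
    · exact Or.inl (by simp; omega)
    · refine Or.inr ⟨by simp [hk], lt_of_le_of_ne (not_lt.mp h) ?_⟩
      simpa using k.castSucc_lt_succ.ne

variable {σ : Equiv.Perm (Fin n)} {m : Fin n → ℤ} {d : GL (Fin n) ℚ_[p]}

theorem entry_mul_permGL_s11 (hdT : d ∈ Tset p n) (hdent : ∀ k, entry p n d k k = (p : ℚ_[p]) ^ m k)
    (i j : Fin n) :
    entry p n (d * permGL p n σ) i j = if σ j = i then (p : ℚ_[p]) ^ m i else 0 := by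
  rw [entry_mul, Finset.sum_eq_single i (fun k _ hki => by rw [hdT i k hki.symm, zero_mul])
    (by simp), hdent]
  simp only [entry, permGL, Equiv.Perm.permMatrix, GeneralLinearGroup.val_mkOfDetNeZero,
    transpose_apply, PEquiv.toMatrix_apply, Equiv.toPEquiv_apply, Option.mem_some_iff, mul_ite,
    mul_one, mul_zero]

theorem entry_conj_mul_permGL (hdT : d ∈ Tset p n)
    (hdent : ∀ k, entry p n d k k = (p : ℚ_[p]) ^ m k) (v : GL (Fin n) ℚ_[p]) (i j : Fin n) :
    entry p n ((d * permGL p n σ)⁻¹ * v * (d * permGL p n σ)) i j =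
      (p : ℚ_[p]) ^ (m (σ j) - m (σ i)) * entry p n v (σ i) (σ j) := by
  suffices h : (((d * permGL p n σ)⁻¹ * v * (d * permGL p n σ) : GL (Fin n) ℚ_[p]) :
      Matrix (Fin n) (Fin n) ℚ_[p]) =
        of fun i j => (p : ℚ_[p]) ^ (m (σ j) - m (σ i)) * entry p n v (σ i) (σ j) from
    congrFun (congrFun h i) j
  rw [Units.val_mul, Units.val_mul, mul_assoc, Units.inv_mul_eq_iff_eq_mul]
  ext r s
  have hW := entry_mul_permGL_s11 (σ := σ) hdT hdent
  simp only [entry] at hW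
  have hp : (p : ℚ_[p]) ≠ 0 := by exact_mod_cast (Fact.out : p.Prime).ne_zero
  simp only [mul_apply, hW, of_apply, mul_ite, mul_zero, ite_mul, zero_mul, Finset.sum_ite_eq,
    Finset.mem_univ, if_true]
  simp only [← Equiv.eq_symm_apply, Finset.sum_ite_eq', Finset.mem_univ, if_true,
    Equiv.apply_symm_apply]
  rw [← mul_assoc, ← zpow_add₀ hp, add_sub_cancel, mul_comm]
  rfl

theorem conj_mul_permGL_mem_Jset (hdT : d ∈ Tset p n)
    (hdent : ∀ k, entry p n d k k = (p : ℚ_[p]) ^ m k)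
    (hmono : StrictMono fun k => toLex (m k, σ⁻¹ k)) {u : GL (Fin n) ℚ_[p]} (hu : u ∈ Jset p n)
    (hu_up : (u : Matrix (Fin n) (Fin n) ℚ_[p]).IsUpperTriangular) :
    (d * permGL p n σ)⁻¹ * u * (d * permGL p n σ) ∈ Jset p n := by
  have hp : (1 : ℝ) < p := by exact_mod_cast (Fact.out : p.Prime).one_lt
  have hm : Monotone m := Prod.Lex.monotone_fst_ofLex.comp hmono.monotone
  have hint : ∀ v : GL (Fin n) ℚ_[p], (∀ i j, ‖entry p n v i j‖ ≤ 1) →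
      (v : Matrix (Fin n) (Fin n) ℚ_[p]).IsUpperTriangular →
      ∀ i j, ‖entry p n ((d * permGL p n σ)⁻¹ * v * (d * permGL p n σ)) i j‖ ≤ 1 := by
    intro v hv hv_up i j
    rw [entry_conj_mul_permGL hdT hdent, norm_mul, Padic.norm_p_zpow]
    rcases lt_or_ge (σ j) (σ i) with h | h
    · simp [entry, hv_up h]
    · exact mul_le_one₀ (zpow_le_one_of_nonpos₀ hp.le (by linarith [hm h])) (norm_nonneg _) (hv _ _)
  have hu_inv_up : ((u⁻¹ : GL (Fin n) ℚ_[p]) : Matrix (Fin n) (Fin n) ℚ_[p]).IsUpperTriangular := by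
    have := u.invertible
    rw [coe_units_inv]
    exact blockTriangular_inv_of_blockTriangular hu_up
  refine ⟨hint u hu.1 hu_up, ?_, fun i j hji => ?_⟩
  · rw [show ((d * permGL p n σ)⁻¹ * u * (d * permGL p n σ))⁻¹ =
      (d * permGL p n σ)⁻¹ * u⁻¹ * (d * permGL p n σ) by group]
    exact hint _ hu.2.1 hu_inv_up
  rw [entry_conj_mul_permGL hdT hdent, norm_mul, Padic.norm_p_zpow]
  rcases lt_or_ge (σ j) (σ i) with h | h
  · simp [entry, hu_up h]
  have hlt : m (σ i) < m (σ j) := by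
    have := hmono (h.lt_of_ne (σ.injective.ne hji.ne'))
    simp only [Prod.Lex.lt_iff, ofLex_toLex, Equiv.Perm.coe_inv, Equiv.symm_apply_apply] at this
    exact this.resolve_right fun h' => hji.asymm h'.2
  exact mul_lt_one_of_nonneg_of_lt_one_left (by positivity)
    (zpow_lt_one_of_neg₀ hp (by linarith)) (hu.1 _ _)

end Iwahori

/-- For every `σ ∈ S_n`, the double coset `J·d_σ·w_σ·J` is contained in
`N⁻_p·d_σ·w_σ·J`: every element can be written `l·d_σ·w_σ·j` with `l` lower
unitriangular with strictly-lower entries in `pℤ_p`, and `j ∈ J`.  Here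
`d_σ = diag(p^{μ_1},…,p^{μ_n})` with `μ_n = 0` and `μ_i = μ_{i+1} - 1` if
`σ⁻¹(i) > σ⁻¹(i+1)`, `μ_i = μ_{i+1}` otherwise. -/
theorem double_coset_dw_subset (σ : Equiv.Perm (Fin n))
    (m : Fin n → ℤ)
    (hmrec : ∀ (k : Fin n) (hk : (k : ℕ) + 1 < n),
      m k = m (finSucc n k hk)
        - if σ⁻¹ (finSucc n k hk) < σ⁻¹ k then 1 else 0)
    (d : GL (Fin n) ℚ_[p]) (hdT : d ∈ Tset p n)
    (hdent : ∀ k : Fin n, entry p n d k k = (p : ℚ_[p]) ^ (m k))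
    (x : GL (Fin n) ℚ_[p]) (hx : x ∈ dcos p n (d * permGL p n σ)) :
    ∃ l : GL (Fin n) ℚ_[p],
      (∀ i : Fin n, entry p n l i i = 1) ∧
      (∀ i j : Fin n, i < j → entry p n l i j = 0) ∧
      (∀ i j : Fin n, j < i → ‖entry p n l i j‖ < 1) ∧
      ∃ j ∈ Jset p n, x = l * (d * permGL p n σ) * j := by
  obtain ⟨a, ha, b, hb, rfl⟩ := hx
  obtain ⟨l, hl, u, hu, hu_up, rfl⟩ := exists_NminusPset_mul_upperTriangular ha
  have hC := conj_mul_permGL_mem_Jset hdT hdent (strictMono_toLex_exponent σ m hmrec) hu hu_up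
  exact ⟨l, hl.1, hl.2.1, hl.2.2, _, mul_mem_Jset hC hb, by group⟩
end
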